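/- For a C² function u of the variables ξ, η, z (where {ξ, η} is an orthonormal basis of the xy-plane), the divergence of the rotated entropy Σ_{ξη}(∇u) equals (∂z u − (1/2)|∇⊥u|²)(∂ξ²u − ∂η²u). -/

import Mathlib

noncomputable section

def px (u : ℝ × ℝ × ℝ → ℝ) (p : ℝ × ℝ × ℝ) : ℝ := fderiv ℝ u p (1, 0, 0)
def py (u : ℝ × ℝ × ℝ → ℝ) (p : ℝ × ℝ × ℝ) : ℝ := fderiv ℝ u p (0, 1, 0)
def pz (u : ℝ × ℝ × ℝ → ℝ) (p : ℝ × ℝ × ℝ) : ℝ := fderiv ℝ u p (0, 0, 1)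

/-- Directional derivative in a planar direction `v`. -/
def dirD (v : ℝ × ℝ) (u : ℝ × ℝ × ℝ → ℝ) (p : ℝ × ℝ × ℝ) : ℝ := fderiv ℝ u p (v.1, v.2, 0)

def SigmaRot (ξ η : ℝ × ℝ) (m : ℝ × ℝ × ℝ) : ℝ × ℝ × ℝ :=
  let mξ := m.1 * ξ.1 + m.2.1 * ξ.2
  let mη := m.1 * η.1 + m.2.1 * η.2
  let A := m.2.2 * mξ - mξ * mη^2 / 2 - mξ^3 / 6
  let B := -(m.2.2 * mη) + mη * mξ^2 / 2 + mη^3 / 6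
  (A * ξ.1 + B * η.1, A * ξ.2 + B * η.2, -(mξ^2) / 2 + mη^2 / 2)

set_option maxHeartbeats 2000000 in
/-- div Σ_{ξη}(∇u) = (∂z u − ½|∇⊥u|²)(∂ξ²u − ∂η²u) for C² `u` and {ξ,η} an orthonormal
basis of the plane. -/
theorem div_sigmaRot (u : ℝ × ℝ × ℝ → ℝ) (hu : ContDiff ℝ 2 u) (ξ η : ℝ × ℝ)
    (hξ : ξ.1^2 + ξ.2^2 = 1) (hη : η.1^2 + η.2^2 = 1) (hξη : ξ.1 * η.1 + ξ.2 * η.2 = 0)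
    (p : ℝ × ℝ × ℝ) :
    px (fun q => (SigmaRot ξ η (px u q, py u q, pz u q)).1) p +
      py (fun q => (SigmaRot ξ η (px u q, py u q, pz u q)).2.1) p +
      pz (fun q => (SigmaRot ξ η (px u q, py u q, pz u q)).2.2) p =
      (pz u p - (1/2) * ((px u p)^2 + (py u p)^2)) *
        (dirD ξ (dirD ξ u) p - dirD η (dirD η u) p) := by
  have hu1 : ContDiff ℝ 1 (fderiv ℝ u) := hu.fderiv_right (by norm_num)
  have hud : ∀ q, DifferentiableAt ℝ (fderiv ℝ u) q := fun q => (hu1.differentiable one_ne_zero) q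
  have hw : ∀ (w : ℝ × ℝ × ℝ) (q : ℝ × ℝ × ℝ),
      HasFDerivAt (fun r => fderiv ℝ u r w)
        ((ContinuousLinearMap.apply ℝ ℝ w).comp (fderiv ℝ (fderiv ℝ u) q)) q :=
    fun w q => (ContinuousLinearMap.apply ℝ ℝ w).hasFDerivAt.comp q (hud q).hasFDerivAt
  have hline : ∀ v : ℝ × ℝ × ℝ, HasDerivAt (fun t : ℝ => p + t • v) v 0 := by
    intro v
    simpa using ((hasDerivAt_id (0:ℝ)).smul_const v).const_add p
  have k : ∀ v w : ℝ × ℝ × ℝ,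
      HasDerivAt (fun t : ℝ => fderiv ℝ u (p + t • v) w) (fderiv ℝ (fderiv ℝ u) p v w) 0 := by
    intro v w
    have h := HasFDerivAt.comp_hasDerivAt_of_eq (x := 0) (hw w p) (hline v) (by simp)
    exact h
  have hsymm : ∀ v w : ℝ × ℝ × ℝ,
      fderiv ℝ (fderiv ℝ u) p v w = fderiv ℝ (fderiv ℝ u) p w v :=
    second_derivative_symmetric (fun y => (hu.differentiable two_ne_zero y).hasFDerivAt)
      (hud p).hasFDerivAt
  -- differentiability of the gradient components
  have da : ∀ q, DifferentiableAt ℝ (fun r => fderiv ℝ u r ((1:ℝ), (0:ℝ), (0:ℝ))) q :=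
    fun q => (hw _ q).differentiableAt
  have db : ∀ q, DifferentiableAt ℝ (fun r => fderiv ℝ u r ((0:ℝ), (1:ℝ), (0:ℝ))) q :=
    fun q => (hw _ q).differentiableAt
  have dc : ∀ q, DifferentiableAt ℝ (fun r => fderiv ℝ u r ((0:ℝ), (0:ℝ), (1:ℝ))) q :=
    fun q => (hw _ q).differentiableAt
  have dcomp1 : DifferentiableAt ℝ
      (fun q =>
        (fderiv ℝ u q (0, 0, 1) * (fderiv ℝ u q (1, 0, 0) * ξ.1 + fderiv ℝ u q (0, 1, 0) * ξ.2) -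
            (fderiv ℝ u q (1, 0, 0) * ξ.1 + fderiv ℝ u q (0, 1, 0) * ξ.2) *
              (fderiv ℝ u q (1, 0, 0) * η.1 + fderiv ℝ u q (0, 1, 0) * η.2) ^ 2 / 2 -
            (fderiv ℝ u q (1, 0, 0) * ξ.1 + fderiv ℝ u q (0, 1, 0) * ξ.2) ^ 3 / 6) * ξ.1 +
          (-(fderiv ℝ u q (0, 0, 1) * (fderiv ℝ u q (1, 0, 0) * η.1 + fderiv ℝ u q (0, 1, 0) * η.2)) +
              (fderiv ℝ u q (1, 0, 0) * η.1 + fderiv ℝ u q (0, 1, 0) * η.2) *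
                (fderiv ℝ u q (1, 0, 0) * ξ.1 + fderiv ℝ u q (0, 1, 0) * ξ.2) ^ 2 / 2 +
              (fderiv ℝ u q (1, 0, 0) * η.1 + fderiv ℝ u q (0, 1, 0) * η.2) ^ 3 / 6) * η.1) p := by fun_prop
  have dcomp2 : DifferentiableAt ℝ
      (fun q =>
        (fderiv ℝ u q (0, 0, 1) * (fderiv ℝ u q (1, 0, 0) * ξ.1 + fderiv ℝ u q (0, 1, 0) * ξ.2) -
            (fderiv ℝ u q (1, 0, 0) * ξ.1 + fderiv ℝ u q (0, 1, 0) * ξ.2) *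
              (fderiv ℝ u q (1, 0, 0) * η.1 + fderiv ℝ u q (0, 1, 0) * η.2) ^ 2 / 2 -
            (fderiv ℝ u q (1, 0, 0) * ξ.1 + fderiv ℝ u q (0, 1, 0) * ξ.2) ^ 3 / 6) * ξ.2 +
          (-(fderiv ℝ u q (0, 0, 1) * (fderiv ℝ u q (1, 0, 0) * η.1 + fderiv ℝ u q (0, 1, 0) * η.2)) +
              (fderiv ℝ u q (1, 0, 0) * η.1 + fderiv ℝ u q (0, 1, 0) * η.2) *
                (fderiv ℝ u q (1, 0, 0) * ξ.1 + fderiv ℝ u q (0, 1, 0) * ξ.2) ^ 2 / 2 +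
              (fderiv ℝ u q (1, 0, 0) * η.1 + fderiv ℝ u q (0, 1, 0) * η.2) ^ 3 / 6) * η.2) p := by fun_prop
  have dcomp3 : DifferentiableAt ℝ
      (fun q =>
        -(fderiv ℝ u q (1, 0, 0) * ξ.1 + fderiv ℝ u q (0, 1, 0) * ξ.2) ^ 2 / 2 +
          (fderiv ℝ u q (1, 0, 0) * η.1 + fderiv ℝ u q (0, 1, 0) * η.2) ^ 2 / 2) p := by fun_prop
  -- derivatives along lines, combinator style
  have hlineD1 := dcomp1.hasFDerivAt.comp_hasDerivAt_of_eq (x := 0) (hline (1, 0, 0)) (by simp)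
  have hlineD2 := dcomp2.hasFDerivAt.comp_hasDerivAt_of_eq (x := 0) (hline (0, 1, 0)) (by simp)
  have hlineD3 := dcomp3.hasFDerivAt.comp_hasDerivAt_of_eq (x := 0) (hline (0, 0, 1)) (by simp)
  have amξ1 := ((k (1,0,0) (1,0,0)).mul_const ξ.1).add ((k (1,0,0) (0,1,0)).mul_const ξ.2)
  have amη1 := ((k (1,0,0) (1,0,0)).mul_const η.1).add ((k (1,0,0) (0,1,0)).mul_const η.2)
  have amξ2 := ((k (0,1,0) (1,0,0)).mul_const ξ.1).add ((k (0,1,0) (0,1,0)).mul_const ξ.2)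
  have amη2 := ((k (0,1,0) (1,0,0)).mul_const η.1).add ((k (0,1,0) (0,1,0)).mul_const η.2)
  have amξ3 := ((k (0,0,1) (1,0,0)).mul_const ξ.1).add ((k (0,0,1) (0,1,0)).mul_const ξ.2)
  have amη3 := ((k (0,0,1) (1,0,0)).mul_const η.1).add ((k (0,0,1) (0,1,0)).mul_const η.2)
  have hA1 := (((k (1,0,0) (0,0,1)).mul amξ1).sub ((amξ1.mul (amη1.pow 2)).div_const 2)).sub
    ((amξ1.pow 3).div_const 6)
  have hB1 := ((((k (1,0,0) (0,0,1)).mul amη1).neg).add ((amη1.mul (amξ1.pow 2)).div_const 2)).add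
    ((amη1.pow 3).div_const 6)
  have hA2 := (((k (0,1,0) (0,0,1)).mul amξ2).sub ((amξ2.mul (amη2.pow 2)).div_const 2)).sub
    ((amξ2.pow 3).div_const 6)
  have hB2 := ((((k (0,1,0) (0,0,1)).mul amη2).neg).add ((amη2.mul (amξ2.pow 2)).div_const 2)).add
    ((amη2.pow 3).div_const 6)
  have hcomb1 := (hA1.mul_const ξ.1).add (hB1.mul_const η.1)
  have hcomb2 := (hA2.mul_const ξ.2).add (hB2.mul_const η.2)
  have hcomb3 := ((((amξ3.pow 2).neg).div_const 2).add ((amη3.pow 2).div_const 2))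
  have keyeq1 := hlineD1.unique hcomb1
  have keyeq2 := hlineD2.unique hcomb2
  have keyeq3 := hlineD3.unique hcomb3
  have hdir : ∀ v : ℝ × ℝ, fderiv ℝ (dirD v u) p (v.1, v.2, 0) =
      fderiv ℝ (fderiv ℝ u) p (v.1, v.2, 0) (v.1, v.2, 0) := by
    intro v
    rw [show dirD v u = fun r => fderiv ℝ u r (v.1, v.2, 0) from rfl, (hw _ p).fderiv]
    simp
  simp only [px, py, pz, dirD, SigmaRot]
  rw [keyeq1, keyeq2, keyeq3, hdir ξ, hdir η]
  simp only [Pi.add_apply, Pi.pow_apply, Pi.neg_apply, Pi.mul_apply, zero_smul, add_zero]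
  have hv : ∀ r s' : ℝ, ((r, s', (0:ℝ)) : ℝ × ℝ × ℝ) = r • (1, 0, 0) + s' • (0, 1, 0) := by
    intro r s'; simp [Prod.ext_iff]
  rw [hv ξ.1 ξ.2, hv η.1 η.2]
  simp only [map_add, map_smul, ContinuousLinearMap.add_apply, ContinuousLinearMap.coe_smul',
    Pi.smul_apply, smul_eq_mul]
  rw [hsymm (0,1,0) (1,0,0), hsymm (0,0,1) (1,0,0), hsymm (0,0,1) (0,1,0)]
  set a := fderiv ℝ u p (1, 0, 0) with hadef
  set b := fderiv ℝ u p (0, 1, 0) with hbdef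
  set c := fderiv ℝ u p (0, 0, 1) with hcdef
  set H11 := fderiv ℝ (fderiv ℝ u) p (1, 0, 0) (1, 0, 0) with h11def
  set H12 := fderiv ℝ (fderiv ℝ u) p (1, 0, 0) (0, 1, 0) with h12def
  set H13 := fderiv ℝ (fderiv ℝ u) p (1, 0, 0) (0, 0, 1) with h13def
  set H22 := fderiv ℝ (fderiv ℝ u) p (0, 1, 0) (0, 1, 0) with h22def
  set H23 := fderiv ℝ (fderiv ℝ u) p (0, 1, 0) (0, 0, 1) with h23def
  set H33 := fderiv ℝ (fderiv ℝ u) p (0, 0, 1) (0, 0, 1) with h33def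
  set s := ξ.1 * η.2 - ξ.2 * η.1 with hsdef
  have hs : s ^ 2 = 1 := by
    rw [hsdef]; linear_combination (η.1^2 + η.2^2) * hξ + hη - (ξ.1*η.1 + ξ.2*η.2) * hξη
  have hy1 : η.1 = -(s * ξ.2) := by
    rw [hsdef]; linear_combination ξ.1 * hξη - η.1 * hξ
  have hy2 : η.2 = s * ξ.1 := by
    rw [hsdef]; linear_combination ξ.2 * hξη - η.2 * hξ
  rw [hy1, hy2]
  linear_combination
    ((-1/2)*b^2*H22*ξ.1^2 + (1/2)*b^2*H22*ξ.1^4 + (1/2)*b^2*H22*ξ.1^4*s^2 + (1)*b^2*H12*ξ.1*ξ.2 + (-1)*b^2*H12*ξ.1*ξ.2^3 + (-2)*b^2*H12*ξ.1^3*ξ.2 + (-1)*b^2*H12*ξ.1^3*ξ.2*s^2 + (-1/2)*b^2*H11*ξ.2^2 + (1/2)*b^2*H11*ξ.2^4 + (1/2)*b^2*H11*ξ.1^2*ξ.2^2 + (1/2)*b^2*H11*ξ.1^2*ξ.2^2*s^2 + (-1/2)*b^2*H11*ξ.1^4 + (1)*a*b*H22*ξ.1*ξ.2^3 + (-1)*a*b*H22*ξ.1^3*ξ.2*s^2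 + (2)*a*b*H12*ξ.1^2*ξ.2^2 + (2)*a*b*H12*ξ.1^2*ξ.2^2*s^2 + (-1)*a*b*H11*ξ.1*ξ.2^3*s^2 + (1)*a*b*H11*ξ.1^3*ξ.2 + (-1/2)*a^2*H22*ξ.2^4 + (-1/2)*a^2*H22*ξ.1^2 + (1/2)*a^2*H22*ξ.1^2*ξ.2^2 + (1/2)*a^2*H22*ξ.1^2*ξ.2^2*s^2 + (1/2)*a^2*H22*ξ.1^4 + (1)*a^2*H12*ξ.1*ξ.2 + (-2)*a^2*H12*ξ.1*ξ.2^3 + (-1)*a^2*H12*ξ.1*ξ.2^3*s^2 + (-1)*a^2*H12*ξ.1^3*ξ.2 + (-1/2)*a^2*H11*ξ.2^2 + (1/2)*a^2*H11*ξ.2^4 + (1/2)*a^2*H11*ξ.2^4*s^2) * hs +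
    ((-1/2)*b^2*H22*ξ.2^2 + (1/2)*b^2*H22*ξ.1^2 + (-2)*b^2*H12*ξ.1*ξ.2 + (1/2)*b^2*H11*ξ.2^2 + (-1/2)*b^2*H11*ξ.1^2 + (-1/2)*a^2*H22*ξ.2^2 + (1/2)*a^2*H22*ξ.1^2 + (-2)*a^2*H12*ξ.1*ξ.2 + (1/2)*a^2*H11*ξ.2^2 + (-1/2)*a^2*H11*ξ.1^2) * hξ
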